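/- Let V be a finite-dimensional real vector space. The space A'(V) of algebraic covariant derivative curvature tensors on V equals the linear span of the set {γ̂(S,Ŝ) : S a symmetric bilinear form on V, Ŝ a totally symmetric trilinear form on V}, where γ̂(S,Ŝ)(w,x,y,z,u) := S(w,z)Ŝ(x,y,u) − S(x,z)Ŝ(w,y,u) + S(x,y)Ŝ(w,z,u) − S(w,y)Ŝ(x,z,u). -/
import Mathlib

namespace Stmt2Aux

variable {V : Type} [AddCommGroup V] [Module ℝ V]

set_option linter.unusedSectionVars false

/-- Build a trilinear map from a function linear in each slot. -/
def mk3 (f : V → V → V → ℝ)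
    (ha0 : ∀ a a' b c, f (a + a') b c = f a b c + f a' b c)
    (hs0 : ∀ (t : ℝ) a b c, f (t • a) b c = t * f a b c)
    (ha1 : ∀ a b b' c, f a (b + b') c = f a b c + f a b' c)
    (hs1 : ∀ (t : ℝ) a b c, f a (t • b) c = t * f a b c)
    (ha2 : ∀ a b c c', f a b (c + c') = f a b c + f a b c')
    (hs2 : ∀ (t : ℝ) a b c, f a b (t • c) = t * f a b c) :
    MultilinearMap ℝ (fun _ : Fin 3 => V) ℝ where
  toFun v := f (v 0) (v 1) (v 2)
  map_update_add' := by
    intro inst v i x y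
    obtain rfl : inst = instDecidableEqFin 3 := Subsingleton.elim _ _
    fin_cases i <;> simp [Function.update_apply, ha0, ha1, ha2]
  map_update_smul' := by
    intro inst v i t x
    obtain rfl : inst = instDecidableEqFin 3 := Subsingleton.elim _ _
    fin_cases i <;> simp [Function.update_apply, hs0, hs1, hs2, smul_eq_mul]

@[simp] lemma mk3_apply (f : V → V → V → ℝ) (h0 h1 h2 h3 h4 h5) (v : Fin 3 → V) :
    mk3 f h0 h1 h2 h3 h4 h5 v = f (v 0) (v 1) (v 2) := rfl

/-- Build a 5-linear map from a function linear in each slot. -/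
def mk5 (f : V → V → V → V → V → ℝ)
    (ha0 : ∀ a a' b c d e, f (a + a') b c d e = f a b c d e + f a' b c d e)
    (hs0 : ∀ (t : ℝ) a b c d e, f (t • a) b c d e = t * f a b c d e)
    (ha1 : ∀ a b b' c d e, f a (b + b') c d e = f a b c d e + f a b' c d e)
    (hs1 : ∀ (t : ℝ) a b c d e, f a (t • b) c d e = t * f a b c d e)
    (ha2 : ∀ a b c c' d e, f a b (c + c') d e = f a b c d e + f a b c' d e)
    (hs2 : ∀ (t : ℝ) a b c d e, f a b (t • c) d e = t * f a b c d e)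
    (ha3 : ∀ a b c d d' e, f a b c (d + d') e = f a b c d e + f a b c d' e)
    (hs3 : ∀ (t : ℝ) a b c d e, f a b c (t • d) e = t * f a b c d e)
    (ha4 : ∀ a b c d e e', f a b c d (e + e') = f a b c d e + f a b c d e')
    (hs4 : ∀ (t : ℝ) a b c d e, f a b c d (t • e) = t * f a b c d e) :
    MultilinearMap ℝ (fun _ : Fin 5 => V) ℝ where
  toFun v := f (v 0) (v 1) (v 2) (v 3) (v 4)
  map_update_add' := by
    intro inst v i x y
    obtain rfl : inst = instDecidableEqFin 5 := Subsingleton.elim _ _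
    fin_cases i <;> simp [Function.update_apply, ha0, ha1, ha2, ha3, ha4]
  map_update_smul' := by
    intro inst v i t x
    obtain rfl : inst = instDecidableEqFin 5 := Subsingleton.elim _ _
    fin_cases i <;> simp [Function.update_apply, hs0, hs1, hs2, hs3, hs4, smul_eq_mul]

@[simp] lemma mk5_apply (f : V → V → V → V → V → ℝ) (h0 h1 h2 h3 h4 h5 h6 h7 h8 h9)
    (v : Fin 5 → V) :
    mk5 f h0 h1 h2 h3 h4 h5 h6 h7 h8 h9 v = f (v 0) (v 1) (v 2) (v 3) (v 4) := rfl

lemma upd5_0 (a b c d e t : V) : Function.update ![a,b,c,d,e] 0 t = ![t,b,c,d,e] := by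
  funext i; fin_cases i <;> simp
lemma upd5_1 (a b c d e t : V) : Function.update ![a,b,c,d,e] 1 t = ![a,t,c,d,e] := by
  funext i; fin_cases i <;> simp
lemma upd5_2 (a b c d e t : V) : Function.update ![a,b,c,d,e] 2 t = ![a,b,t,d,e] := by
  funext i; fin_cases i <;> simp
lemma upd5_3 (a b c d e t : V) : Function.update ![a,b,c,d,e] 3 t = ![a,b,c,t,e] := by
  funext i; fin_cases i <;> simp
lemma upd5_4 (a b c d e t : V) : Function.update ![a,b,c,d,e] 4 t = ![a,b,c,d,t] := by
  funext i; fin_cases i <;> simp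
lemma upd3_0 (a b c t : V) : Function.update ![a,b,c] 0 t = ![t,b,c] := by
  funext i; fin_cases i <;> simp
lemma upd3_1 (a b c t : V) : Function.update ![a,b,c] 1 t = ![a,t,c] := by
  funext i; fin_cases i <;> simp
lemma upd3_2 (a b c t : V) : Function.update ![a,b,c] 2 t = ![a,b,t] := by
  funext i; fin_cases i <;> simp

section slotlemmas
variable (F : MultilinearMap ℝ (fun _ : Fin 5 => V) ℝ)
variable (G : MultilinearMap ℝ (fun _ : Fin 3 => V) ℝ)

lemma F5add1 (a s t c d e : V) :
    F ![a, s + t, c, d, e] = F ![a, s, c, d, e] + F ![a, t, c, d, e] := by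
  have h := F.map_update_add ![a,s,c,d,e] 1 s t
  rwa [upd5_1, upd5_1, upd5_1] at h
lemma F5add3 (a b c s t e : V) :
    F ![a, b, c, s + t, e] = F ![a, b, c, s, e] + F ![a, b, c, t, e] := by
  have h := F.map_update_add ![a,b,c,s,e] 3 s t
  rwa [upd5_3, upd5_3, upd5_3] at h
lemma F5add4 (a b c d s t : V) :
    F ![a, b, c, d, s + t] = F ![a, b, c, d, s] + F ![a, b, c, d, t] := by
  have h := F.map_update_add ![a,b,c,d,s] 4 s t
  rwa [upd5_4, upd5_4, upd5_4] at h
lemma F5smul1 (k : ℝ) (a s c d e : V) :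
    F ![a, k • s, c, d, e] = k * F ![a, s, c, d, e] := by
  have h := F.map_update_smul ![a,s,c,d,e] 1 k s
  rwa [upd5_1, upd5_1, smul_eq_mul] at h
lemma F5smul3 (k : ℝ) (a b c s e : V) :
    F ![a, b, c, k • s, e] = k * F ![a, b, c, s, e] := by
  have h := F.map_update_smul ![a,b,c,s,e] 3 k s
  rwa [upd5_3, upd5_3, smul_eq_mul] at h
lemma F5smul4 (k : ℝ) (a b c d s : V) :
    F ![a, b, c, d, k • s] = k * F ![a, b, c, d, s] := by
  have h := F.map_update_smul ![a,b,c,d,s] 4 k s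
  rwa [upd5_4, upd5_4, smul_eq_mul] at h

lemma F3add0 (s t b c : V) : G ![s + t, b, c] = G ![s, b, c] + G ![t, b, c] := by
  have h := G.map_update_add ![s,b,c] 0 s t
  rwa [upd3_0, upd3_0, upd3_0] at h
lemma F3add1 (a s t c : V) : G ![a, s + t, c] = G ![a, s, c] + G ![a, t, c] := by
  have h := G.map_update_add ![a,s,c] 1 s t
  rwa [upd3_1, upd3_1, upd3_1] at h
lemma F3add2 (a b s t : V) : G ![a, b, s + t] = G ![a, b, s] + G ![a, b, t] := by
  have h := G.map_update_add ![a,b,s] 2 s t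
  rwa [upd3_2, upd3_2, upd3_2] at h
lemma F3smul0 (k : ℝ) (s b c : V) : G ![k • s, b, c] = k * G ![s, b, c] := by
  have h := G.map_update_smul ![s,b,c] 0 k s
  rwa [upd3_0, upd3_0, smul_eq_mul] at h
lemma F3smul1 (k : ℝ) (a s c : V) : G ![a, k • s, c] = k * G ![a, s, c] := by
  have h := G.map_update_smul ![a,s,c] 1 k s
  rwa [upd3_1, upd3_1, smul_eq_mul] at h
lemma F3smul2 (k : ℝ) (a b s : V) : G ![a, b, k • s] = k * G ![a, b, s] := by
  have h := G.map_update_smul ![a,b,s] 2 k s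
  rwa [upd3_2, upd3_2, smul_eq_mul] at h

end slotlemmas

section gdef
variable (F : MultilinearMap ℝ (fun _ : Fin 5 => V) ℝ)

/-- The symmetrization `B(a,c)(p,q,r)` of `F`. -/
def g (a c p q r : V) : ℝ :=
  F ![a,p,c,q,r] + F ![a,p,c,r,q] + F ![a,q,c,p,r] + F ![a,q,c,r,p] +
  F ![a,r,c,p,q] + F ![a,r,c,q,p] +
  F ![c,p,a,q,r] + F ![c,p,a,r,q] + F ![c,q,a,p,r] + F ![c,q,a,r,p] +
  F ![c,r,a,p,q] + F ![c,r,a,q,p]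

lemma g_213 (a c p q r : V) : g F a c q p r = g F a c p q r := by simp only [g]; ring
lemma g_132 (a c p q r : V) : g F a c p r q = g F a c p q r := by simp only [g]; ring
lemma g_231 (a c p q r : V) : g F a c q r p = g F a c p q r := by simp only [g]; ring
lemma g_312 (a c p q r : V) : g F a c r p q = g F a c p q r := by simp only [g]; ring
lemma g_321 (a c p q r : V) : g F a c r q p = g F a c p q r := by simp only [g]; ring
lemma g_swapac (a c p q r : V) : g F c a p q r = g F a c p q r := by simp only [g]; ring

/-- `B(a,c)` as a trilinear map. -/
def triSym (a c : V) : MultilinearMap ℝ (fun _ : Fin 3 => V) ℝ :=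
  mk3 (fun p q r => g F a c p q r)
    (by intro p p' q r; simp only [g, F5add1, F5add3, F5add4]; ring)
    (by intro t p q r; simp only [g, F5smul1, F5smul3, F5smul4]; ring)
    (by intro p q q' r; simp only [g, F5add1, F5add3, F5add4]; ring)
    (by intro t p q r; simp only [g, F5smul1, F5smul3, F5smul4]; ring)
    (by intro p q r r'; simp only [g, F5add1, F5add3, F5add4]; ring)
    (by intro t p q r; simp only [g, F5smul1, F5smul3, F5smul4]; ring)

lemma triSym_apply (a c : V) (v : Fin 3 → V) :
    triSym F a c v = g F a c (v 0) (v 1) (v 2) := rfl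

lemma triSym_perm (a c : V) (v : Fin 3 → V) (p : Equiv.Perm (Fin 3)) :
    triSym F a c (fun i => v (p i)) = triSym F a c v := by
  have hv : triSym F a c (fun i => v (p i)) = g F a c (v (p 0)) (v (p 1)) (v (p 2)) := rfl
  have h6 : ∀ q : Equiv.Perm (Fin 3),
      (q 0, q 1, q 2) = (0,1,2) ∨ (q 0, q 1, q 2) = (0,2,1) ∨ (q 0, q 1, q 2) = (1,0,2) ∨
      (q 0, q 1, q 2) = (1,2,0) ∨ (q 0, q 1, q 2) = (2,0,1) ∨ (q 0, q 1, q 2) = (2,1,0) := by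
    decide
  have hR : triSym F a c v = g F a c (v 0) (v 1) (v 2) := rfl
  rcases h6 p with h|h|h|h|h|h <;>
    (simp only [Prod.mk.injEq] at h; obtain ⟨h1, h2, h3⟩ := h; rw [hv, h1, h2, h3, hR])
  · exact g_132 F a c _ _ _
  · exact g_213 F a c _ _ _
  · exact g_231 F a c _ _ _
  · exact g_312 F a c _ _ _
  · exact g_321 F a c _ _ _

end gdef

/-- `γ̂(S, Sh)` as a 5-linear map. -/
def gam (S : V →ₗ[ℝ] V →ₗ[ℝ] ℝ) (Sh : MultilinearMap ℝ (fun _ : Fin 3 => V) ℝ) :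
    MultilinearMap ℝ (fun _ : Fin 5 => V) ℝ :=
  mk5 (fun w x y z u => S w z * Sh ![x,y,u] - S x z * Sh ![w,y,u] +
        S x y * Sh ![w,z,u] - S w y * Sh ![x,z,u])
    (by intro a a' b c d e
        simp only [map_add, LinearMap.add_apply, F3add0, F3add1, F3add2]; ring)
    (by intro t a b c d e
        simp only [map_smul, LinearMap.smul_apply, smul_eq_mul, F3smul0, F3smul1, F3smul2]; ring)
    (by intro a b b' c d e
        simp only [map_add, LinearMap.add_apply, F3add0, F3add1, F3add2]; ring)
    (by intro t a b c d e
        simp only [map_smul, LinearMap.smul_apply, smul_eq_mul, F3smul0, F3smul1, F3smul2]; ring)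
    (by intro a b c c' d e
        simp only [map_add, LinearMap.add_apply, F3add0, F3add1, F3add2]; ring)
    (by intro t a b c d e
        simp only [map_smul, LinearMap.smul_apply, smul_eq_mul, F3smul0, F3smul1, F3smul2]; ring)
    (by intro a b c d d' e
        simp only [map_add, LinearMap.add_apply, F3add0, F3add1, F3add2]; ring)
    (by intro t a b c d e
        simp only [map_smul, LinearMap.smul_apply, smul_eq_mul, F3smul0, F3smul1, F3smul2]; ring)
    (by intro a b c d e e'
        simp only [map_add, LinearMap.add_apply, F3add0, F3add1, F3add2]; ring)
    (by intro t a b c d e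
        simp only [map_smul, LinearMap.smul_apply, smul_eq_mul, F3smul0, F3smul1, F3smul2]; ring)

lemma gam_apply (S : V →ₗ[ℝ] V →ₗ[ℝ] ℝ) (Sh : MultilinearMap ℝ (fun _ : Fin 3 => V) ℝ)
    (w x y z u : V) :
    gam S Sh ![w,x,y,z,u] = S w z * Sh ![x,y,u] - S x z * Sh ![w,y,u] +
      S x y * Sh ![w,z,u] - S w y * Sh ![x,z,u] := rfl

section basisstuff
variable [FiniteDimensional ℝ V]
variable (F : MultilinearMap ℝ (fun _ : Fin 5 => V) ℝ)

local notation "bV" => Module.finBasis ℝ V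

lemma expand_slot0 (a b c d e : V) :
    F ![a,b,c,d,e] = ∑ i, ((bV).repr a i) • F ![bV i, b, c, d, e] := by
  have h0 : F ![a,b,c,d,e] = F.toLinearMap ![a,b,c,d,e] 0 a := by
    rw [MultilinearMap.toLinearMap]; simp [upd5_0]
  rw [h0]
  conv_lhs => rw [← (bV).sum_repr a]
  rw [map_sum]
  refine Finset.sum_congr rfl fun i _ => ?_
  rw [map_smul]
  congr 1
  rw [MultilinearMap.toLinearMap]; simp [upd5_0]

lemma expand_slot2 (a b c d e : V) :
    F ![a,b,c,d,e] = ∑ i, ((bV).repr c i) • F ![a, b, bV i, d, e] := by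
  have h0 : F ![a,b,c,d,e] = F.toLinearMap ![a,b,c,d,e] 2 c := by
    rw [MultilinearMap.toLinearMap]; simp [upd5_2]
  rw [h0]
  conv_lhs => rw [← (bV).sum_repr c]
  rw [map_sum]
  refine Finset.sum_congr rfl fun i _ => ?_
  rw [map_smul]
  congr 1
  rw [MultilinearMap.toLinearMap]; simp [upd5_2]

lemma exp02 (a p c q r : V) :
    F ![a,p,c,q,r] = ∑ i, ∑ j, (bV).repr a i * (bV).repr c j * F ![bV i, p, bV j, q, r] := by
  rw [expand_slot0 F a p c q r]
  refine Finset.sum_congr rfl fun i _ => ?_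
  rw [expand_slot2 F (bV i) p c q r, Finset.smul_sum]
  refine Finset.sum_congr rfl fun j _ => ?_
  simp only [smul_eq_mul]; ring

lemma exp02sw (a p c q r : V) :
    (∑ i, ∑ j, (bV).repr a i * (bV).repr c j * F ![bV j, p, bV i, q, r]) = F ![c,p,a,q,r] := by
  rw [Finset.sum_comm, exp02 F c p a q r]
  refine Finset.sum_congr rfl fun i _ => Finset.sum_congr rfl fun j _ => ?_
  ring

lemma sum_expand (a c p q r : V) :
    (∑ i, ∑ j, (bV).repr a i * (bV).repr c j * g F (bV i) (bV j) p q r) = g F a c p q r := by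
  have e1 := (exp02 F a p c q r).symm
  have e2 := (exp02 F a p c r q).symm
  have e3 := (exp02 F a q c p r).symm
  have e4 := (exp02 F a q c r p).symm
  have e5 := (exp02 F a r c p q).symm
  have e6 := (exp02 F a r c q p).symm
  have f1 := exp02sw F a p c q r
  have f2 := exp02sw F a p c r q
  have f3 := exp02sw F a q c p r
  have f4 := exp02sw F a q c r p
  have f5 := exp02sw F a r c p q
  have f6 := exp02sw F a r c q p
  simp only [g, mul_add, Finset.sum_add_distrib]
  rw [e1, e2, e3, e4, e5, e6, f1, f2, f3, f4, f5, f6]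

/-- the symmetric bilinear form built from two dual-basis covectors -/
noncomputable def Sm (i j : Fin (Module.finrank ℝ V)) : V →ₗ[ℝ] V →ₗ[ℝ] ℝ :=
  LinearMap.mk₂ ℝ (fun a c => (bV).repr a i * (bV).repr c j + (bV).repr a j * (bV).repr c i)
    (by intro a a' c; simp [map_add]; ring)
    (by intro t a c; simp [map_smul]; ring)
    (by intro a c c'; simp [map_add]; ring)
    (by intro t a c; simp [map_smul]; ring)

lemma Sm_apply (i j : Fin (Module.finrank ℝ V)) (a c : V) :
    Sm i j a c = (bV).repr a i * (bV).repr c j + (bV).repr a j * (bV).repr c i := rfl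

lemma Sm_symm (i j : Fin (Module.finrank ℝ V)) (a c : V) : Sm i j a c = Sm i j c a := by
  simp only [Sm_apply]; ring

lemma mainExpand (w x y z u : V) :
    (∑ i, ∑ j, gam (Sm i j) (triSym F (bV i) (bV j)) ![w,x,y,z,u]) =
      2 * (g F w z x y u - g F x z w y u + g F x y w z u - g F w y x z u) := by
  have hpt : ∀ i j, gam (Sm i j) (triSym F (bV i) (bV j)) ![w,x,y,z,u] =
      ((bV).repr w i * (bV).repr z j * g F (bV i) (bV j) x y u +
        (bV).repr z i * (bV).repr w j * g F (bV i) (bV j) x y u -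
        (bV).repr x i * (bV).repr z j * g F (bV i) (bV j) w y u -
        (bV).repr z i * (bV).repr x j * g F (bV i) (bV j) w y u +
        (bV).repr x i * (bV).repr y j * g F (bV i) (bV j) w z u +
        (bV).repr y i * (bV).repr x j * g F (bV i) (bV j) w z u) -
        (bV).repr w i * (bV).repr y j * g F (bV i) (bV j) x z u -
        (bV).repr y i * (bV).repr w j * g F (bV i) (bV j) x z u := by
    intro i j
    rw [gam_apply, Sm_apply, Sm_apply, Sm_apply, Sm_apply,
      triSym_apply, triSym_apply, triSym_apply, triSym_apply]
    show _ * g F (bV i) (bV j) x y u - _ * g F (bV i) (bV j) w y u +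
      _ * g F (bV i) (bV j) w z u - _ * g F (bV i) (bV j) x z u = _
    ring
  calc (∑ i, ∑ j, gam (Sm i j) (triSym F (bV i) (bV j)) ![w,x,y,z,u])
      = ∑ i, ∑ j, (((bV).repr w i * (bV).repr z j * g F (bV i) (bV j) x y u +
        (bV).repr z i * (bV).repr w j * g F (bV i) (bV j) x y u -
        (bV).repr x i * (bV).repr z j * g F (bV i) (bV j) w y u -
        (bV).repr z i * (bV).repr x j * g F (bV i) (bV j) w y u +
        (bV).repr x i * (bV).repr y j * g F (bV i) (bV j) w z u +
        (bV).repr y i * (bV).repr x j * g F (bV i) (bV j) w z u) -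
        (bV).repr w i * (bV).repr y j * g F (bV i) (bV j) x z u -
        (bV).repr y i * (bV).repr w j * g F (bV i) (bV j) x z u) := by
        exact Finset.sum_congr rfl fun i _ => Finset.sum_congr rfl fun j _ => hpt i j
    _ = 2 * (g F w z x y u - g F x z w y u + g F x y w z u - g F w y x z u) := by
        simp only [Finset.sum_add_distrib, Finset.sum_sub_distrib]
        rw [sum_expand F w z x y u, sum_expand F z w x y u,
          sum_expand F x z w y u, sum_expand F z x w y u,
          sum_expand F x y w z u, sum_expand F y x w z u,
          sum_expand F w y x z u, sum_expand F y w x z u,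
          g_swapac F w z x y u, g_swapac F x z w y u,
          g_swapac F x y w z u, g_swapac F w y x z u]
        ring

end basisstuff

section key
variable (F : MultilinearMap ℝ (fun _ : Fin 5 => V) ℝ)

lemma keyId
    (h1 : ∀ u w x y z : V, F ![w, x, y, z, u] = - F ![w, x, z, y, u])
    (h2 : ∀ u w x y z : V, F ![w, x, y, z, u] = F ![y, z, w, x, u])
    (h3 : ∀ u w x y z : V,
      F ![w, x, y, z, u] + F ![w, y, z, x, u] + F ![w, z, x, y, u] = 0)
    (h4 : ∀ u w x y z : V,
      F ![w, x, y, z, u] + F ![w, x, z, u, y] + F ![w, x, u, y, z] = 0)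
    (w x y z u : V) :
    g F w z x y u - g F x z w y u + g F x y w z u - g F w y x z u
      = (-24) * F ![w, x, y, z, u] := by
  simp only [g]
  linear_combination
      (3 : ℝ) * h1 u w x y z +
      (-14 : ℝ) * h1 u w y x z +
      (-2 : ℝ) * h1 z w y x u +
      (-2 : ℝ) * h1 u w z x y +
      (2 : ℝ) * h1 y w z x u +
      (4 : ℝ) * h1 x w z y u +
      (-2 : ℝ) * h1 z w u x y +
      (2 : ℝ) * h1 y w u x z +
      (2 : ℝ) * h1 x w u y z +
      (-1 : ℝ) * h1 u x w y z +
      (-2 : ℝ) * h1 u x y w z +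
      (6 : ℝ) * h1 z x y w u +
      (2 : ℝ) * h1 u x z w y +
      (-6 : ℝ) * h1 y x z w u +
      (-4 : ℝ) * h1 w x z y u +
      (2 : ℝ) * h1 z x u w y +
      (-2 : ℝ) * h1 y x u w z +
      (-2 : ℝ) * h1 w x u y z +
      (3 : ℝ) * h1 u y z w x +
      (2 : ℝ) * h1 z y u w x +
      (-1 : ℝ) * h1 u z y w x +
      (-2 : ℝ) * h1 y z u w x +
      (4 : ℝ) * h2 u w x y z +
      (3 : ℝ) * h2 z w x y u +
      (-2 : ℝ) * h2 u w x z y +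
      (-3 : ℝ) * h2 y w x z u +
      (8 : ℝ) * h2 u w y x z +
      (2 : ℝ) * h2 z w y x u +
      (-1 : ℝ) * h2 u w y z x +
      (-1 : ℝ) * h2 x w y z u +
      (-8 : ℝ) * h2 u w z x y +
      (-2 : ℝ) * h2 y w z x u +
      (1 : ℝ) * h2 u w z y x +
      (1 : ℝ) * h2 x w z y u +
      (6 : ℝ) * h2 z w u x y +
      (-6 : ℝ) * h2 y w u x z +
      (1 : ℝ) * h2 z w u y x +
      (1 : ℝ) * h2 x w u y z +
      (-1 : ℝ) * h2 y w u z x +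
      (-1 : ℝ) * h2 x w u z y +
      (2 : ℝ) * h2 u x w y z +
      (1 : ℝ) * h2 z x w y u +
      (-1 : ℝ) * h2 y x w z u +
      (1 : ℝ) * h2 u x y z w +
      (1 : ℝ) * h2 w x y z u +
      (-1 : ℝ) * h2 u x z y w +
      (-1 : ℝ) * h2 w x z y u +
      (-1 : ℝ) * h2 z x u y w +
      (-1 : ℝ) * h2 w x u y z +
      (1 : ℝ) * h2 y x u z w +
      (1 : ℝ) * h2 w x u z y +
      (16 : ℝ) * h3 u w x y z +
      (-4 : ℝ) * h3 z w x y u +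
      (4 : ℝ) * h3 y w x z u +
      (-4 : ℝ) * h3 x w y z u +
      (4 : ℝ) * h3 w x y z u +
      (6 : ℝ) * h4 u w y x z +
      (-6 : ℝ) * h4 u w z x y +
      (-6 : ℝ) * h4 u x y w z +
      (6 : ℝ) * h4 u x z w y


end key

end Stmt2Aux

/-- For a finite-dimensional real vector space `V`, the space `A'(V)` of
algebraic covariant derivative curvature tensors equals the linear span of
`{γ̂(S,Ŝ) : S symmetric bilinear, Ŝ totally symmetric trilinear}`, where
`γ̂(S,Ŝ)(w,x,y,z,u) = S(w,z)Ŝ(x,y,u) − S(x,z)Ŝ(w,y,u) + S(x,y)Ŝ(w,z,u) − S(w,y)Ŝ(x,z,u)`. -/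
theorem stmt_2 (V : Type) [AddCommGroup V] [Module ℝ V] [FiniteDimensional ℝ V] :
    {R : MultilinearMap ℝ (fun _ : Fin 5 => V) ℝ |
      (∀ u w x y z : V, R ![w, x, y, z, u] = - R ![w, x, z, y, u]) ∧
      (∀ u w x y z : V, R ![w, x, y, z, u] = R ![y, z, w, x, u]) ∧
      (∀ u w x y z : V,
        R ![w, x, y, z, u] + R ![w, y, z, x, u] + R ![w, z, x, y, u] = 0) ∧
      (∀ u w x y z : V,
        R ![w, x, y, z, u] + R ![w, x, z, u, y] + R ![w, x, u, y, z] = 0)} =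
    ↑(Submodule.span ℝ {T : MultilinearMap ℝ (fun _ : Fin 5 => V) ℝ |
      ∃ S : V →ₗ[ℝ] V →ₗ[ℝ] ℝ, ∃ Sh : MultilinearMap ℝ (fun _ : Fin 3 => V) ℝ,
        (∀ x y : V, S x y = S y x) ∧
        (∀ (v : Fin 3 → V) (p : Equiv.Perm (Fin 3)), Sh (fun i => v (p i)) = Sh v) ∧
        ∀ w x y z u : V,
          T ![w, x, y, z, u] = S w z * Sh ![x, y, u] - S x z * Sh ![w, y, u] +
            S x y * Sh ![w, z, u] - S w y * Sh ![x, z, u]}) := by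
  classical
  ext R
  simp only [Set.mem_setOf_eq, SetLike.mem_coe]
  constructor
  · rintro ⟨h1, h2, h3, h4⟩
    have key := Stmt2Aux.keyId R h1 h2 h3 h4
    have main : ∀ w x y z u : V,
        (∑ i, ∑ j, Stmt2Aux.gam (Stmt2Aux.Sm i j)
            (Stmt2Aux.triSym R (Module.finBasis ℝ V i) (Module.finBasis ℝ V j)) ![w,x,y,z,u])
          = (-48) * R ![w, x, y, z, u] := by
      intro w x y z u
      rw [Stmt2Aux.mainExpand R w x y z u, key w x y z u]; ring
    have hR : R = ∑ i, ∑ j, ((-48 : ℝ))⁻¹ •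
        Stmt2Aux.gam (Stmt2Aux.Sm i j)
          (Stmt2Aux.triSym R (Module.finBasis ℝ V i) (Module.finBasis ℝ V j)) := by
      ext v
      have hv : v = ![v 0, v 1, v 2, v 3, v 4] := by
        funext k; fin_cases k <;> rfl
      rw [hv]
      simp only [MultilinearMap.sum_apply, MultilinearMap.smul_apply, smul_eq_mul]
      simp only [← Finset.mul_sum]
      rw [main (v 0) (v 1) (v 2) (v 3) (v 4)]
      ring
    rw [hR]
    exact Submodule.sum_mem _ fun i _ => Submodule.sum_mem _ fun j _ =>
      Submodule.smul_mem _ _ (Submodule.subset_span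
        ⟨Stmt2Aux.Sm i j, Stmt2Aux.triSym R _ _, Stmt2Aux.Sm_symm i j,
          Stmt2Aux.triSym_perm R _ _, fun w x y z u => rfl⟩)
  · intro hR
    let A : Submodule ℝ (MultilinearMap ℝ (fun _ : Fin 5 => V) ℝ) :=
      { carrier := {R : MultilinearMap ℝ (fun _ : Fin 5 => V) ℝ |
          (∀ u w x y z : V, R ![w, x, y, z, u] = - R ![w, x, z, y, u]) ∧
          (∀ u w x y z : V, R ![w, x, y, z, u] = R ![y, z, w, x, u]) ∧
          (∀ u w x y z : V,
            R ![w, x, y, z, u] + R ![w, y, z, x, u] + R ![w, z, x, y, u] = 0) ∧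
          (∀ u w x y z : V,
            R ![w, x, y, z, u] + R ![w, x, z, u, y] + R ![w, x, u, y, z] = 0)}
        add_mem' := by
          rintro a b ⟨a1, a2, a3, a4⟩ ⟨b1, b2, b3, b4⟩
          refine ⟨?_, ?_, ?_, ?_⟩ <;> intro u w x y z <;>
            simp only [MultilinearMap.add_apply]
          · linear_combination a1 u w x y z + b1 u w x y z
          · linear_combination a2 u w x y z + b2 u w x y z
          · linear_combination a3 u w x y z + b3 u w x y z
          · linear_combination a4 u w x y z + b4 u w x y z
        zero_mem' := by
          refine ⟨?_, ?_, ?_, ?_⟩ <;> intro u w x y z <;>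
            simp [MultilinearMap.zero_apply]
        smul_mem' := by
          rintro t a ⟨a1, a2, a3, a4⟩
          refine ⟨?_, ?_, ?_, ?_⟩ <;> intro u w x y z <;>
            simp only [MultilinearMap.smul_apply, smul_eq_mul]
          · linear_combination t * a1 u w x y z
          · linear_combination t * a2 u w x y z
          · linear_combination t * a3 u w x y z
          · linear_combination t * a4 u w x y z }
    have hgen : {T : MultilinearMap ℝ (fun _ : Fin 5 => V) ℝ |
        ∃ S : V →ₗ[ℝ] V →ₗ[ℝ] ℝ, ∃ Sh : MultilinearMap ℝ (fun _ : Fin 3 => V) ℝ,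
          (∀ x y : V, S x y = S y x) ∧
          (∀ (v : Fin 3 → V) (p : Equiv.Perm (Fin 3)), Sh (fun i => v (p i)) = Sh v) ∧
          ∀ w x y z u : V,
            T ![w, x, y, z, u] = S w z * Sh ![x, y, u] - S x z * Sh ![w, y, u] +
              S x y * Sh ![w, z, u] - S w y * Sh ![x, z, u]} ⊆ ↑A := by
      rintro T ⟨S, Sh, hS, hSh, hT⟩
      have sw1 : ∀ a b c : V, Sh ![b, a, c] = Sh ![a, b, c] := by
        intro a b c
        have h := hSh ![a, b, c] (Equiv.swap 0 1)
        have he : (fun i => (![a, b, c] : Fin 3 → V) ((Equiv.swap 0 1) i)) = ![b, a, c] := by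
          funext i; fin_cases i <;> simp [Equiv.swap_apply_def]
        rwa [he] at h
      have sw2 : ∀ a b c : V, Sh ![a, c, b] = Sh ![a, b, c] := by
        intro a b c
        have h := hSh ![a, b, c] (Equiv.swap 1 2)
        have he : (fun i => (![a, b, c] : Fin 3 → V) ((Equiv.swap 1 2) i)) = ![a, c, b] := by
          funext i; fin_cases i <;> simp [Equiv.swap_apply_def]
        rwa [he] at h
      refine ⟨?_, ?_, ?_, ?_⟩ <;> intro u w x y z
      · rw [hT w x y z u, hT w x z y u]; ring
      · rw [hT w x y z u, hT y z w x u, hS y x, hS z x, hS z w, hS y w,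
          sw1 w z u, sw1 w y u, sw1 x y u, sw1 x z u]; ring
      · rw [hT w x y z u, hT w y z x u, hT w z x y u, hS y x, hS z y, hS z x,
          sw1 x y u, sw1 x z u, sw1 y z u]; ring
      · rw [hT w x y z u, hT w x z u y, hT w x u y z,
          sw2 x y z, sw2 w y z, sw2 w y u, sw2 x y u, sw2 x z u, sw2 w z u]; ring
    exact Submodule.span_le.2 hgen hR
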